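/- arXiv:1511.01705 — 3 statements merged into one kernel-verified Lean document; each statement's English description precedes it below -/
import Mathlib

section
/- Let q ≥ 2, n = 2m, and let U₀, U₁, …, U_{2^m} be a spread of 𝔽₂ⁿ. Let k₀, k₁, …, k_{2^m}, r be elements of {0, 1, …, q−1} satisfying Σ_{i=0}^{2^m} ζ_q^{k_i} = ζ_q^{r}, and define f : 𝔽₂ⁿ → ℤ_q by f(x) = k_i if x ∈ U_i and x ≠ 0, and f(0) = r. Then f is a regular gbent function; explicitly, H_f(0) = 2^{n/2} ζ_q^{r}, and for every nonzero u ∈ 𝔽₂ⁿ one has H_f(u) = 2^{n/2} ζ_q^{k_t}, where t is the unique index with u ∈ U_t^⊥. Consequently the dual f* of f is given by f*(x) = k_i if x ∈ U_i^⊥ and x ≠ 0, and f*(0) = r. -/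
open scoped BigOperators

/-- `ζ_q = e^{2πi/q}`. -/
noncomputable def zeta (q : ℕ) : ℂ := Complex.exp (2 * Real.pi * Complex.I / q)

/-- The standard inner product `⟨u,x⟩ = Σᵢ uᵢxᵢ` on `𝔽₂ⁿ`. -/
def ip {n : ℕ} (u x : Fin n → ZMod 2) : ZMod 2 := ∑ i, u i * x i

/-- The generalized Walsh–Hadamard transform
`H_f(u) = Σ_x ζ_q^{f(x)} (−1)^{⟨u,x⟩}` of `f : 𝔽₂ⁿ → ℤ_q`. -/
noncomputable def gWHT {n q : ℕ} (f : (Fin n → ZMod 2) → ZMod q) (u : Fin n → ZMod 2) : ℂ :=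
  ∑ x : Fin n → ZMod 2, zeta q ^ (f x).val * (-1 : ℂ) ^ (ip u x).val

/-- `f` is gbent if `|H_f(u)| = 2^{n/2}` for all `u`. -/
def IsGbent {n q : ℕ} (f : (Fin n → ZMod 2) → ZMod q) : Prop :=
  ∀ u, ‖gWHT f u‖ = (2 : ℝ) ^ ((n : ℝ) / 2)

/-- `g` is the dual of `f`: `H_f(u) = 2^{n/2} ζ_q^{g(u)}` for all `u`. -/
def IsDualOf {n q : ℕ} (g f : (Fin n → ZMod 2) → ZMod q) : Prop :=
  ∀ u, gWHT f u = ((2 : ℝ) ^ ((n : ℝ) / 2) : ℝ) * zeta q ^ (g u).val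

/-- `f` is a regular gbent function:
`H_f(u) = 2^{n/2} ζ_q^{j_u}` for some `j_u ∈ ℤ_q`, for every `u`. -/
def IsRegularGbent {n q : ℕ} (f : (Fin n → ZMod 2) → ZMod q) : Prop :=
  IsGbent f ∧ ∀ u, ∃ j : ZMod q, gWHT f u = ((2 : ℝ) ^ ((n : ℝ) / 2) : ℝ) * zeta q ^ j.val

/-- The orthogonal complement of a subspace `U ⊆ 𝔽₂ⁿ` w.r.t. `⟨·,·⟩`. -/
def orthComp {n : ℕ} (U : Submodule (ZMod 2) (Fin n → ZMod 2)) : Set (Fin n → ZMod 2) :=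
  {u | ∀ x ∈ U, ip u x = 0}

/-- `F : 𝔽₂ⁿ → ℤ_q^m` is vectorial gbent if every component function
`c·F`, `c ≠ 0`, is gbent. -/
def IsVectorialGbent {n q m : ℕ} (F : (Fin n → ZMod 2) → Fin m → ZMod q) : Prop :=
  ∀ c : Fin m → ZMod q, c ≠ 0 → IsGbent (fun x => ∑ j, c j * F x j)

/-!
Since `Σ ζ^{k_i} = ζ^r`, the function `ζ^f` is the sum `Σ_i ζ^{k_i} 1_{U_i}` of indicators of the
spread's subspaces, including at `x = 0`. The Walsh–Hadamard transform of `1_U` is `2^m 1_{U^⊥}`,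
so `H_f(u) = 2^m Σ_i ζ^{k_i} 1_{U_i^⊥}(u)`. The orthogonal complements `U_i^⊥` form a spread again,
hence for `u ≠ 0` exactly one term survives, while for `u = 0` all of them do and sum to `ζ^r`.
-/

theorem LinearMap.BilinForm.orthogonal_sup {R M : Type*} [CommRing R] [AddCommGroup M]
    [Module R M] (B : LinearMap.BilinForm R M) (N L : Submodule R M) :
    B.orthogonal (N ⊔ L) = B.orthogonal N ⊓ B.orthogonal L := by
  ext x
  simp only [Submodule.mem_inf, mem_orthogonal_iff]
  refine ⟨fun h => ⟨fun y hy => h y (Submodule.mem_sup_left hy),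
    fun y hy => h y (Submodule.mem_sup_right hy)⟩, fun ⟨hN, hL⟩ y hy => ?_⟩
  obtain ⟨a, ha, b, hb, rfl⟩ := Submodule.mem_sup.1 hy
  rw [LinearMap.map_add₂, hN a ha, hL b hb, add_zero]

open Module Finset Function

section Spread

variable {K V ι : Type*} [Field K] [Fintype K] [AddCommGroup V] [Module K V] [Fintype ι]

structure IsSpread (m : ℕ) (U : ι → Submodule K V) : Prop where
  finrank_ambient : finrank K V = 2 * m
  card_index : Fintype.card ι = Fintype.card K ^ m + 1
  finrank_eq : ∀ i, finrank K (U i) = m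
  pairwise_disjoint : Pairwise (Disjoint on U)

namespace IsSpread

variable {m : ℕ} {U : ι → Submodule K V}

/-- The `|K|^m + 1` punctured subspaces are disjoint and have `|K|^m - 1` elements each, which is
exactly the number of nonzero vectors of `V`. -/
theorem exists_mem [Fintype V] (hU : IsSpread m U) {x : V} (hx : x ≠ 0) : ∃ i, x ∈ U i := by
  classical
  let S : ι → Finset V := fun i => ({y | y ∈ U i} : Finset V).erase 0
  have hS_card : ∀ i, #(S i) = Fintype.card K ^ m - 1 := fun i => by
    rw [card_erase_of_mem (by simp), ← Fintype.card_subtype,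
      card_eq_pow_finrank (K := K) (V := U i), hU.finrank_eq]
  have hS_disj : Set.PairwiseDisjoint ↑(univ : Finset ι) S := fun i _ j _ hij => by
    refine Finset.disjoint_left.2 fun y hyi hyj => ?_
    simp only [S, mem_erase, mem_filter, mem_univ, true_and] at hyi hyj
    exact hyi.1 ((Submodule.disjoint_def.1 (hU.pairwise_disjoint hij)) y hyi.2 hyj.2)
  have hsub : univ.biUnion S ⊆ univ.erase 0 := fun y hy => by
    obtain ⟨i, -, hy⟩ := mem_biUnion.1 hy
    exact mem_erase.2 ⟨(mem_erase.1 hy).1, mem_univ y⟩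
  have hcard : #(univ.erase (0 : V)) ≤ #(univ.biUnion S) := by
    rw [card_biUnion hS_disj, sum_congr rfl fun i _ => hS_card i, sum_const, card_univ,
      hU.card_index, card_erase_of_mem (mem_univ 0), card_univ, card_eq_pow_finrank (K := K),
      hU.finrank_ambient, pow_mul', sq, smul_eq_mul, ← Nat.mul_self_sub_mul_self_eq, one_mul]
  obtain ⟨i, -, hi⟩ := mem_biUnion.1 <|
    (eq_of_subset_of_card_le hsub hcard).symm ▸ mem_erase.2 ⟨hx, mem_univ x⟩
  exact ⟨i, (mem_filter.1 (mem_of_mem_erase hi)).2⟩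

theorem existsUnique_mem [Fintype V] (hU : IsSpread m U) {x : V} (hx : x ≠ 0) :
    ∃! i, x ∈ U i := by
  obtain ⟨i, hi⟩ := hU.exists_mem hx
  refine ⟨i, hi, fun j hj => ?_⟩
  by_contra hji
  exact hx (Submodule.disjoint_def.1 (hU.pairwise_disjoint hji) x hj hi)

theorem orthogonal [FiniteDimensional K V] (hU : IsSpread m U) {B : LinearMap.BilinForm K V}
    (hB : B.Nondegenerate) : IsSpread m fun i => B.orthogonal (U i) := by
  refine ⟨hU.finrank_ambient, hU.card_index, fun i => ?_, fun i j hij => ?_⟩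
  · rw [LinearMap.BilinForm.finrank_orthogonal hB, hU.finrank_ambient, hU.finrank_eq]
    omega
  · have hsup : U i ⊔ U j = ⊤ := by
      refine Submodule.eq_top_of_finrank_eq ?_
      have := Submodule.finrank_sup_add_finrank_inf_eq (U i) (U j)
      rw [disjoint_iff.1 (hU.pairwise_disjoint hij), finrank_bot, hU.finrank_eq,
        hU.finrank_eq] at this
      rw [hU.finrank_ambient]
      omega
    rw [onFun, disjoint_iff, ← LinearMap.BilinForm.orthogonal_sup, hsup,
      LinearMap.BilinForm.orthogonal_top_eq_bot hB]

end IsSpread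

end Spread

section WalshHadamard

open scoped Classical

variable {n q : ℕ}

def ipForm (n : ℕ) : LinearMap.BilinForm (ZMod 2) (Fin n → ZMod 2) := Matrix.toBilin' 1

theorem ipForm_apply (u x : Fin n → ZMod 2) : ipForm n u x = ip u x := by
  simp [ipForm, Matrix.toBilin'_apply', ip, dotProduct]

theorem ipForm_nondegenerate : (ipForm n).Nondegenerate :=
  LinearMap.BilinForm.nondegenerate_toBilin'_of_det_ne_zero' 1 (by simp)

theorem ip_comm (u x : Fin n → ZMod 2) : ip u x = ip x u :=
  dotProduct_comm u x

theorem mem_orthComp_iff {W : Submodule (ZMod 2) (Fin n → ZMod 2)} {u : Fin n → ZMod 2} :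
    u ∈ orthComp W ↔ u ∈ (ipForm n).orthogonal W := by
  simp only [LinearMap.BilinForm.mem_orthogonal_iff, ipForm_apply, ip_comm _ u]
  rfl

theorem neg_one_pow_val_eq_one_iff (a : ZMod 2) : (-1 : ℂ) ^ a.val = 1 ↔ a = 0 := by
  rw [neg_one_pow_eq_one_iff_even (by norm_num), ← ZMod.val_eq_zero, Nat.even_iff]
  have := a.val_lt
  omega

theorem sum_neg_one_pow_ip (W : Submodule (ZMod 2) (Fin n → ZMod 2)) (u : Fin n → ZMod 2) :
    ∑ x : W, (-1 : ℂ) ^ (ip u x).val =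
      if u ∈ orthComp W then 2 ^ finrank (ZMod 2) W else 0 := by
  let ψ : AddChar W ℂ := (AddChar.zmodChar 2 (by norm_num : (-1 : ℂ) ^ 2 = 1)).compAddMonoidHom
    ((ipForm n u).comp W.subtype).toAddMonoidHom
  have hψ : ∀ x, ψ x = (-1 : ℂ) ^ (ip u x).val := fun x => by
    simp [ψ, AddChar.zmodChar_apply, ipForm_apply]
  have hψ_triv : ψ = 0 ↔ u ∈ orthComp W := by
    simp only [AddChar.eq_zero_iff, hψ, neg_one_pow_val_eq_one_iff, Subtype.forall]
    rfl
  simp_rw [← hψ]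
  rw [AddChar.sum_eq_ite, card_eq_pow_finrank (K := ZMod 2), ZMod.card]
  simp only [hψ_triv, Nat.cast_pow, Nat.cast_ofNat]

theorem gWHT_eq_sum_ite_of_zeta_pow_eq_sum_ite {ι : Type*} [Fintype ι]
    {f : (Fin n → ZMod 2) → ZMod q} (W : ι → Submodule (ZMod 2) (Fin n → ZMod 2)) (c : ι → ℂ)
    (hf : ∀ x, zeta q ^ (f x).val = ∑ i, if x ∈ W i then c i else 0) (u : Fin n → ZMod 2) :
    gWHT f u = ∑ i, if u ∈ orthComp (W i) then 2 ^ finrank (ZMod 2) (W i) * c i else 0 := by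
  simp only [gWHT, hf, sum_mul, ite_mul, zero_mul]
  rw [sum_comm]
  refine sum_congr rfl fun i _ => ?_
  rw [← sum_filter, sum_subtype _ (p := (· ∈ W i)) (fun x => by simp), ← mul_sum,
    sum_neg_one_pow_ip, mul_ite, mul_zero, mul_comm]

theorem norm_zeta (q : ℕ) : ‖zeta q‖ = 1 := by
  rw [zeta, show 2 * Real.pi * Complex.I / q = ((2 * Real.pi / q : ℝ) : ℂ) * Complex.I by
    push_cast; ring, Complex.norm_exp_ofReal_mul_I]

theorem isRegularGbent_iff {f : (Fin n → ZMod 2) → ZMod q} : IsRegularGbent f ↔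
    ∀ u, ∃ j : ZMod q, gWHT f u = ((2 : ℝ) ^ ((n : ℝ) / 2) : ℝ) * zeta q ^ j.val := by
  refine ⟨And.right, fun h => ⟨fun u => ?_, h⟩⟩
  obtain ⟨j, hj⟩ := h u
  rw [hj, norm_mul, Complex.norm_real, norm_pow, norm_zeta, one_pow, mul_one, Real.norm_eq_abs,
    abs_of_pos (by positivity)]

theorem two_rpow_half_two_mul (m : ℕ) :
    (((2 : ℝ) ^ (((2 * m : ℕ) : ℝ) / 2) : ℝ) : ℂ) = 2 ^ m := by
  rw [show ((2 * m : ℕ) : ℝ) / 2 = m by push_cast; ring, Real.rpow_natCast]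
  push_cast
  rfl

end WalshHadamard

open scoped Classical in
theorem zeta_pow_eq_sum_ite {R V ι : Type*} [Semiring R] [AddCommMonoid V] [Module R V]
    [Fintype ι] {q : ℕ} {U : ι → Submodule R V} (hU : ∀ x : V, x ≠ 0 → ∃! i, x ∈ U i)
    {k : ι → ZMod q} {f : V → ZMod q} (hf0 : zeta q ^ (f 0).val = ∑ i, zeta q ^ (k i).val)
    (hf : ∀ i, ∀ x ∈ U i, x ≠ 0 → f x = k i) (x : V) :
    zeta q ^ (f x).val = ∑ i, if x ∈ U i then zeta q ^ (k i).val else 0 := by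
  by_cases hx : x = 0
  · simp [hx, hf0]
  obtain ⟨t, ht, ht_unique⟩ := hU x hx
  rw [sum_eq_single t (fun i _ hi => if_neg fun h => hi (ht_unique i h)) (by simp), if_pos ht,
    hf t x ht hx]

theorem stmt2_general (m q : ℕ)
    (U : Fin (2 ^ m + 1) → Submodule (ZMod 2) (Fin (2 * m) → ZMod 2))
    (hdim : ∀ i, Module.finrank (ZMod 2) (U i) = m)
    (hint : ∀ i j, i ≠ j → U i ⊓ U j = ⊥)
    (k : Fin (2 ^ m + 1) → ZMod q) (r : ZMod q)
    (hsum : ∑ i, zeta q ^ (k i).val = zeta q ^ r.val)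
    (f : (Fin (2 * m) → ZMod 2) → ZMod q)
    (hf0 : f 0 = r)
    (hf : ∀ i, ∀ x ∈ U i, x ≠ 0 → f x = k i) :
    IsRegularGbent f ∧
    gWHT f 0 = (2 : ℂ) ^ m * zeta q ^ r.val ∧
    (∀ u : Fin (2 * m) → ZMod 2, u ≠ 0 →
      (∃! t, u ∈ orthComp (U t)) ∧
      ∀ t, u ∈ orthComp (U t) → gWHT f u = (2 : ℂ) ^ m * zeta q ^ (k t).val) ∧
    (∀ g : (Fin (2 * m) → ZMod 2) → ZMod q, g 0 = r →
      (∀ i, ∀ x ∈ orthComp (U i), x ≠ 0 → g x = k i) → IsDualOf g f) := by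
  have hU : IsSpread m U := ⟨by simp, by simp, hdim, fun i j hij => disjoint_iff.2 (hint i j hij)⟩
  have hU_orth : ∀ u, u ≠ 0 → ∃! t, u ∈ orthComp (U t) := by
    simpa only [mem_orthComp_iff] using
      fun u => (hU.orthogonal ipForm_nondegenerate).existsUnique_mem (x := u)
  have hH := gWHT_eq_sum_ite_of_zeta_pow_eq_sum_ite U _
    (zeta_pow_eq_sum_ite (fun x => hU.existsUnique_mem) (by rw [hf0, hsum]) hf)
  have hH_zero : gWHT f 0 = 2 ^ m * zeta q ^ r.val := by
    simp [hH, orthComp, ip, hdim, ← mul_sum, hsum]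
  have hH_ne_zero : ∀ u, u ≠ 0 → ∀ t, u ∈ orthComp (U t) →
      gWHT f u = 2 ^ m * zeta q ^ (k t).val := fun u hu t ht => by
    rw [hH, sum_eq_single t (fun i _ hi => if_neg fun h => hi ((hU_orth u hu).unique h ht))
      (by simp), if_pos ht, hdim]
  have hdual : ∀ g : (Fin (2 * m) → ZMod 2) → ZMod q, g 0 = r →
      (∀ i, ∀ x ∈ orthComp (U i), x ≠ 0 → g x = k i) → IsDualOf g f := fun g hg0 hg u => by
    rw [two_rpow_half_two_mul]
    by_cases hu : u = 0
    · rw [hu, hH_zero, hg0]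
    · obtain ⟨t, ht, -⟩ := hU_orth u hu
      rw [hH_ne_zero u hu t ht, hg t u ht hu]
  refine ⟨isRegularGbent_iff.2 fun u => ?_, hH_zero, fun u hu => ⟨hU_orth u hu, hH_ne_zero u hu⟩,
    hdual⟩
  rw [two_rpow_half_two_mul]
  by_cases hu : u = 0
  · exact ⟨r, hu ▸ hH_zero⟩
  · obtain ⟨t, ht, -⟩ := hU_orth u hu
    exact ⟨k t, hH_ne_zero u hu t ht⟩

/-- the spread construction (generalized Dillon class) gives regular
gbent functions, with explicit Walsh–Hadamard values and explicit dual. -/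
theorem stmt2 (m q : ℕ) (hq : 2 ≤ q) (hm : 0 < m)
    (U : Fin (2 ^ m + 1) → Submodule (ZMod 2) (Fin (2 * m) → ZMod 2))
    (hdim : ∀ i, Module.finrank (ZMod 2) (U i) = m)
    (hint : ∀ i j, i ≠ j → U i ⊓ U j = ⊥)
    (k : Fin (2 ^ m + 1) → ZMod q) (r : ZMod q)
    (hsum : ∑ i, zeta q ^ (k i).val = zeta q ^ r.val)
    (f : (Fin (2 * m) → ZMod 2) → ZMod q)
    (hf0 : f 0 = r)
    (hf : ∀ i, ∀ x ∈ U i, x ≠ 0 → f x = k i) :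
    IsRegularGbent f ∧
    gWHT f 0 = (2 : ℂ) ^ m * zeta q ^ r.val ∧
    (∀ u : Fin (2 * m) → ZMod 2, u ≠ 0 →
      (∃! t, u ∈ orthComp (U t)) ∧
      ∀ t, u ∈ orthComp (U t) → gWHT f u = (2 : ℂ) ^ m * zeta q ^ (k t).val) ∧
    (∀ g : (Fin (2 * m) → ZMod 2) → ZMod q, g 0 = r →
      (∀ i, ∀ x ∈ orthComp (U i), x ≠ 0 → g x = k i) → IsDualOf g f) :=
  stmt2_general m q U hdim hint k r hsum f hf0 hf
end

section
/- Let a, b ∈ 𝔽_{2^m}* with a ≠ b, and let i = e^{2πi/4}. Then Σ_{s ∈ 𝔽_{2^m}} i^{Tr_m(as) + 2·Tr_m(bs)} = 0, where Tr_m is the absolute trace of 𝔽_{2^m} and its values in 𝔽₂ are identified with the integers 0, 1 in the exponent. -/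
open scoped BigOperators

noncomputable instance (p n : ℕ) [Fact p.Prime] : Fintype (GaloisField p n) :=
  Fintype.ofFinite _

/-- The absolute trace `Tr_m : 𝔽_{2^m} → 𝔽₂`. -/
noncomputable def tr (m : ℕ) (x : GaloisField 2 m) : ZMod 2 :=
  Algebra.trace (ZMod 2) (GaloisField 2 m) x

/-- The generalized Walsh–Hadamard transform of `f : 𝔽_{2^m} × 𝔽_{2^m} → ℤ_q`,
using the inner product `⟨(x₁,y₁),(x₂,y₂)⟩ = Tr_m(x₁x₂ + y₁y₂)`. -/
noncomputable def gWHT2 {m q : ℕ} (f : GaloisField 2 m × GaloisField 2 m → ZMod q)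
    (u : GaloisField 2 m × GaloisField 2 m) : ℂ :=
  ∑ x : GaloisField 2 m × GaloisField 2 m,
    zeta q ^ (f x).val * (-1 : ℂ) ^ (tr m (u.1 * x.1 + u.2 * x.2)).val

/-!
For `x, y ∈ 𝔽₂` one has `i ^ (x + 2y) = (1 + i)/2 · (-1) ^ y + (1 - i)/2 · (-1) ^ (x + y)`,
so the sum splits into the sums of the additive characters `s ↦ (-1) ^ Tr(b s)` and
`s ↦ (-1) ^ Tr((a + b) s)`. Since `b ≠ 0` and `a + b ≠ 0` (as `a ≠ b` in characteristic 2),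
both characters are nontrivial by surjectivity of the trace, so both sums vanish.
-/

lemma neg_one_pow_val_add {R : Type*} [Ring R] (x y : ZMod 2) :
    (-1 : R) ^ (x + y).val = (-1) ^ x.val * (-1) ^ y.val := by
  rw [ZMod.val_add, ← neg_one_pow_eq_pow_mod_two, pow_add]

section TraceCharacter

variable {F : Type*} [Field F] [Algebra (ZMod 2) F]

noncomputable def traceSignChar (c : F) : AddChar F ℂ where
  toFun s := (-1) ^ (Algebra.trace (ZMod 2) F (c * s)).val
  map_zero_eq_one' := by simp
  map_add_eq_mul' x y := by rw [mul_add, map_add, neg_one_pow_val_add]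

lemma traceSignChar_ne_one [Finite F] {c : F} (hc : c ≠ 0) : traceSignChar c ≠ 1 := by
  obtain ⟨z, hz⟩ := Algebra.trace_surjective (ZMod 2) F 1
  refine AddChar.ne_one_iff.2 ⟨c⁻¹ * z, ?_⟩
  rw [traceSignChar, AddChar.coe_mk, mul_inv_cancel_left₀ hc, hz]
  norm_num [ZMod.val_one]

lemma sum_neg_one_pow_trace_mul_eq_zero [Fintype F] {c : F} (hc : c ≠ 0) :
    ∑ s : F, (-1 : ℂ) ^ (Algebra.trace (ZMod 2) F (c * s)).val = 0 :=
  AddChar.sum_eq_zero_of_ne_one (traceSignChar_ne_one hc)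

end TraceCharacter

lemma zeta_four : zeta 4 = Complex.I := by
  rw [zeta]
  convert Complex.exp_pi_div_two_mul_I using 2
  push_cast
  ring

lemma I_pow_val_add_two_mul_val (x y : ZMod 2) :
    Complex.I ^ (x.val + 2 * y.val) =
      (1 + Complex.I) / 2 * (-1) ^ y.val + (1 - Complex.I) / 2 * (-1) ^ (x + y).val := by
  rw [neg_one_pow_val_add]
  fin_cases x <;> fin_cases y <;> norm_num [ZMod.val, pow_succ, Complex.I_sq] <;> ring

theorem stmt5_general (m : ℕ) (a b : GaloisField 2 m)
    (hb : b ≠ 0) (hab : a ≠ b) :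
    ∑ s : GaloisField 2 m,
      zeta 4 ^ ((tr m (a * s)).val + 2 * (tr m (b * s)).val) = 0 := by
  have hab' : a + b ≠ 0 := by rwa [Ne, CharTwo.add_eq_zero]
  simp only [zeta_four, I_pow_val_add_two_mul_val, tr, ← map_add, ← add_mul,
    Finset.sum_add_distrib, ← Finset.mul_sum, sum_neg_one_pow_trace_mul_eq_zero hb,
    sum_neg_one_pow_trace_mul_eq_zero hab', mul_zero, add_zero]

/-- for distinct `a, b ∈ 𝔽_{2^m}^*` and `i = e^{2πi/4}`,
`Σ_s i^{Tr_m(as) + 2 Tr_m(bs)} = 0`. -/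
theorem stmt5 (m : ℕ) (hm : 0 < m) (a b : GaloisField 2 m)
    (ha : a ≠ 0) (hb : b ≠ 0) (hab : a ≠ b) :
    ∑ s : GaloisField 2 m,
      zeta 4 ^ ((tr m (a * s)).val + 2 * (tr m (b * s)).val) = 0 :=
  stmt5_general m a b hb hab
end

section
/- Let q = 2^t and let n > 2 be an even integer. If F : 𝔽₂ⁿ → ℤ_q^m is a vectorial gbent function, then m ≤ n/(2t), i.e. 2tm ≤ n. -/
open scoped BigOperators

/-!
Let `ζ` be a primitive `2^t`-th root of unity and `π = ζ - 1`. In `ℤ[ζ]` the element `π` is prime,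
`2` is associated to `π ^ 2^(t-1)`, complex conjugation maps `π` to an associate, and every element
is congruent to `0` or `1` modulo `π`. Hence an element of `ℤ[ζ]` of absolute value `2^h` is `2^h`
times a unit, and every unit is `≡ 1 (mod π)`.

For `c ≠ 0` the value at `0` of the transform of `c • F` lies in `ℤ[ζ]` and has absolute value
`2^(n/2)`, so it is `2^(n/2) u_c` with `u_c` a unit. Orthogonality of the characters of `ℤ_q^m`
gives `∑_c H_{c•F}(0) = q^m · #F⁻¹(0)`, and the term `c = 0` is `2^n`. If `2tm > n`, dividing by
`2^(n/2)` shows that `∑_{c ≠ 0} u_c` is divisible by `2`; but it is a sum of `q^m - 1` units, an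
odd number of elements `≡ 1 (mod π)`, while `2 ≡ 0 (mod π)`.
-/

open Finset

namespace IsPrimitiveRoot

variable {A : Type*} [CommRing A] [IsDomain A] {n : ℕ} {ζ η : A}

theorem associated_sub_one_sub_one [NeZero n] (hζ : IsPrimitiveRoot ζ n)
    (hη : IsPrimitiveRoot η n) : Associated (ζ - 1) (η - 1) := by
  obtain ⟨i, -, hi, rfl⟩ := hζ.isPrimitiveRoot_iff.mp hη
  exact hζ.associated_sub_one_pow_sub_one_of_coprime hi

open Polynomial in
theorem associated_sub_one_pow_totient {p k : ℕ} [Fact p.Prime]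
    (hζ : IsPrimitiveRoot ζ (p ^ (k + 1))) :
    Associated ((ζ - 1) ^ (p ^ (k + 1)).totient) (p : A) := by
  rw [← eval_one_cyclotomic_prime_pow (R := A) k, cyclotomic_eq_prod_X_sub_primitiveRoots hζ,
    eval_prod, ← hζ.card_primitiveRoots, ← prod_const]
  refine Associated.prod _ _ _ fun η hη ↦ ?_
  simpa using (associated_sub_one_sub_one hζ
    ((mem_primitiveRoots (pow_pos (Fact.out : p.Prime).pos _)).mp hη)).neg_right

end IsPrimitiveRoot

section ResidueFieldTwo

variable {A : Type*} [CommRing A] {p : A}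

theorem dvd_or_dvd_sub_one_of_dvd_two (hp2 : p ∣ 2) (hint : ∀ x, ∃ z : ℤ, p ∣ x - z)
    (x : A) : p ∣ x ∨ p ∣ x - 1 := by
  obtain ⟨z, hz⟩ := hint x
  obtain ⟨w, rfl | rfl⟩ := Int.even_or_odd' z
  · left
    convert hz.add (hp2.mul_right w) using 1
    push_cast
    ring
  · right
    convert hz.add (hp2.mul_right w) using 1
    push_cast
    ring

theorem dvd_two_of_forall_dvd_or_dvd_sub_one (hp : ¬IsUnit p) (hres : ∀ x, p ∣ x ∨ p ∣ x - 1) :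
    p ∣ 2 :=
  (hres 2).resolve_right fun h ↦ hp (isUnit_of_dvd_one (by norm_num at h; exact h))

theorem prime_of_forall_dvd_or_dvd_sub_one (h0 : p ≠ 0) (hp : ¬IsUnit p)
    (hres : ∀ x, p ∣ x ∨ p ∣ x - 1) : Prime p := by
  refine ⟨h0, hp, fun a b hab ↦ or_iff_not_imp_left.mpr fun ha ↦ ?_⟩
  refine (hres b).resolve_right fun hb ↦ hp (isUnit_of_dvd_one ?_)
  have ha := (hres a).resolve_left ha
  have h1 : (1 : A) = a * b - (a - 1) * b - (b - 1) := by ring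
  rw [h1]
  exact dvd_sub (dvd_sub hab (ha.mul_right b)) hb

theorem not_two_dvd_sum_units_of_odd_card (hp : ¬IsUnit p) (hres : ∀ x, p ∣ x ∨ p ∣ x - 1)
    {ι : Type*} {s : Finset ι} (hs : Odd #s) (u : ι → Aˣ) : ¬(2 : A) ∣ ∑ i ∈ s, (u i : A) := by
  intro h2
  obtain ⟨r, hr⟩ := hs
  have hp2 := dvd_two_of_forall_dvd_or_dvd_sub_one hp hres
  have hu : p ∣ ∑ i ∈ s, ((u i : A) - 1) :=
    dvd_sum fun i _ ↦ (hres _).resolve_left fun h ↦ hp (isUnit_of_dvd_unit h (u i).isUnit)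
  rw [sum_sub_distrib, sum_const, hr, nsmul_eq_mul, mul_one] at hu
  have hodd : p ∣ 2 * r + 1 := by exact_mod_cast (dvd_sub_right (hp2.trans h2)).mp hu
  exact hp (isUnit_of_dvd_one ((dvd_add_right (hp2.mul_right r)).mp hodd))

end ResidueFieldTwo

theorem Prime.associated_pow_of_associated_mul_map {A : Type*} [CommRing A] [IsDomain A] {p : A}
    (hp : Prime p) (σ : A →+* A) (hσ : Associated (σ p) p) {x : A} {e : ℕ}
    (h : Associated (x * σ x) (p ^ (2 * e))) : Associated x (p ^ e) := by
  obtain ⟨i, -, hi⟩ := (dvd_prime_pow hp _).mp ((dvd_mul_right x (σ x)).trans h.dvd)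
  have hσi : Associated (σ x) (p ^ i) := (hi.map σ).trans (by rw [map_pow]; exact hσ.pow_pow)
  have h2i : Associated (p ^ (2 * i)) (p ^ (2 * e)) := by
    rw [two_mul, pow_add]
    exact (hi.mul_mul hσi).symm.trans h
  have hie : i = e := by
    have hle := (pow_dvd_pow_iff hp.ne_zero hp.not_isUnit).mp h2i.dvd
    have hge := (pow_dvd_pow_iff hp.ne_zero hp.not_isUnit).mp h2i.symm.dvd
    omega
  rwa [hie] at hi

@[simp, norm_cast]
theorem Subalgebra.coe_ofNat {R A : Type*} [CommSemiring R] [Semiring A] [Algebra R A]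
    (S : Subalgebra R A) (n : ℕ) [n.AtLeastTwo] : ((ofNat(n) : S) : A) = ofNat(n) :=
  rfl

theorem not_isUnit_two_of_le_integralClosure {K : Type*} [Field K] [CharZero K]
    {S : Subalgebra ℤ K} (hS : S ≤ integralClosure ℤ K) : ¬IsUnit (2 : S) := by
  rw [isUnit_iff_exists_inv]
  rintro ⟨v, hv⟩
  have hv : (v : K) = algebraMap ℚ K (1 / 2) := by
    have h := congrArg Subtype.val hv
    push_cast at h
    rw [map_div₀, map_one, map_ofNat]
    field_simp
    linear_combination h
  have hint : IsIntegral ℤ (1 / 2 : ℚ) := by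
    rw [← isIntegral_algebraMap_iff (algebraMap ℚ K).injective, ← hv]
    exact hS v.2
  obtain ⟨z, hz⟩ := IsIntegrallyClosed.isIntegral_iff.mp hint
  have hz2 : (2 * z : ℚ) = 1 := by
    rw [← eq_intCast (algebraMap ℤ ℚ), hz]
    norm_num
  have : 2 * z = 1 := by exact_mod_cast hz2
  omega

section Adjoin

variable {A : Type*} [CommRing A]

def adjoinGen (ζ : A) : Algebra.adjoin ℤ {ζ} :=
  ⟨ζ, Algebra.self_mem_adjoin_singleton ℤ ζ⟩

theorem IsPrimitiveRoot.adjoinGen {ζ : A} {n : ℕ} (hζ : IsPrimitiveRoot ζ n) :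
    IsPrimitiveRoot (adjoinGen ζ) n :=
  IsPrimitiveRoot.coe_submonoidClass_iff.mp hζ

theorem exists_adjoinGen_sub_one_dvd_sub_intCast (ζ : A) (x : Algebra.adjoin ℤ {ζ}) :
    ∃ z : ℤ, adjoinGen ζ - 1 ∣ x - z := by
  obtain ⟨x, hx⟩ := x
  induction hx using Algebra.adjoin_induction with
  | mem y hy =>
    obtain rfl := Set.mem_singleton_iff.mp hy
    exact ⟨1, by simp [adjoinGen]⟩
  | algebraMap r =>
    refine ⟨r, ?_⟩
    rw [show (⟨algebraMap ℤ A r, _⟩ : Algebra.adjoin ℤ {ζ}) = r from Subtype.ext (by simp),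
      sub_self]
    exact dvd_zero _
  | add x y hx hy ihx ihy =>
    obtain ⟨a, ha⟩ := ihx
    obtain ⟨b, hb⟩ := ihy
    refine ⟨a + b, ?_⟩
    change _ ∣ (⟨x, hx⟩ + ⟨y, hy⟩ : Algebra.adjoin ℤ {ζ}) - _
    convert dvd_add ha hb using 1
    push_cast
    ring
  | mul x y hx hy ihx ihy =>
    obtain ⟨a, ha⟩ := ihx
    obtain ⟨b, hb⟩ := ihy
    refine ⟨a * b, ?_⟩
    change _ ∣ (⟨x, hx⟩ * ⟨y, hy⟩ : Algebra.adjoin ℤ {ζ}) - _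
    convert dvd_add (hb.mul_left ⟨x, hx⟩) (ha.mul_left (b : Algebra.adjoin ℤ {ζ})) using 1
    push_cast
    ring

variable [IsDomain A] {ζ : A} {k : ℕ}

theorem associated_adjoinGen_sub_one_pow (hζ : IsPrimitiveRoot ζ (2 ^ (k + 1))) :
    Associated ((adjoinGen ζ - 1) ^ 2 ^ k) 2 := by
  simpa [Nat.totient_prime_pow_succ Nat.prime_two] using
    hζ.adjoinGen.associated_sub_one_pow_totient (p := 2)

theorem adjoinGen_sub_one_dvd_or_dvd_sub_one (hζ : IsPrimitiveRoot ζ (2 ^ (k + 1)))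
    (x : Algebra.adjoin ℤ {ζ}) : adjoinGen ζ - 1 ∣ x ∨ adjoinGen ζ - 1 ∣ x - 1 :=
  dvd_or_dvd_sub_one_of_dvd_two
    ((dvd_pow_self _ (by positivity)).trans (associated_adjoinGen_sub_one_pow hζ).dvd)
    (exists_adjoinGen_sub_one_dvd_sub_intCast ζ) x

end Adjoin

section TwoPowerCyclotomic

variable {K : Type*} [Field K] [CharZero K] {ζ : K} {k : ℕ}

theorem not_isUnit_adjoinGen_sub_one (hζ : IsPrimitiveRoot ζ (2 ^ (k + 1))) :
    ¬IsUnit (adjoinGen ζ - 1) := fun h ↦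
  not_isUnit_two_of_le_integralClosure (adjoin_le_integralClosure (hζ.isIntegral (by positivity)))
    ((associated_adjoinGen_sub_one_pow hζ).isUnit_iff.mp (h.pow _))

theorem prime_adjoinGen_sub_one (hζ : IsPrimitiveRoot ζ (2 ^ (k + 1))) :
    Prime (adjoinGen ζ - 1) :=
  prime_of_forall_dvd_or_dvd_sub_one
    (sub_ne_zero.mpr (hζ.adjoinGen.ne_one (Nat.one_lt_two_pow (by omega))))
    (not_isUnit_adjoinGen_sub_one hζ) (adjoinGen_sub_one_dvd_or_dvd_sub_one hζ)

end TwoPowerCyclotomic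

section ComplexCyclotomic

open ComplexConjugate

variable {ζ : ℂ} {n k : ℕ}

theorem conj_mem_adjoin [NeZero n] (hζ : IsPrimitiveRoot ζ n) {x : ℂ}
    (hx : x ∈ Algebra.adjoin ℤ {ζ}) : conj x ∈ Algebra.adjoin ℤ {ζ} := by
  obtain ⟨i, -, hi⟩ := hζ.eq_pow_of_pow_eq_one (ξ := conj ζ)
    (by rw [← map_pow, hζ.pow_eq_one, map_one])
  have hle : Algebra.adjoin ℤ {ζ} ≤ (Algebra.adjoin ℤ {ζ}).comap (starRingEnd ℂ).toIntAlgHom := by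
    refine Algebra.adjoin_le (Set.singleton_subset_iff.mpr ?_)
    rw [SetLike.mem_coe, Subalgebra.mem_comap, RingHom.toIntAlgHom_apply, ← hi]
    exact pow_mem (Algebra.self_mem_adjoin_singleton ℤ ζ) i
  exact hle hx

def adjoinConj [NeZero n] (hζ : IsPrimitiveRoot ζ n) :
    Algebra.adjoin ℤ {ζ} →+* Algebra.adjoin ℤ {ζ} :=
  (starRingEnd ℂ).restrict _ _ fun _ ↦ conj_mem_adjoin hζ

theorem exists_unit_of_norm_eq_two_pow (hζ : IsPrimitiveRoot ζ (2 ^ (k + 1))) {x : ℂ}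
    (hx : x ∈ Algebra.adjoin ℤ {ζ}) {e : ℕ} (h : ‖x‖ = 2 ^ e) :
    ∃ u : (Algebra.adjoin ℤ {ζ})ˣ, x = 2 ^ e * u := by
  set σ := adjoinConj hζ
  have hσ : IsPrimitiveRoot (σ (adjoinGen ζ)) (2 ^ (k + 1)) :=
    hζ.adjoinGen.map_of_injective fun a b hab ↦
      Subtype.ext (star_injective (congrArg Subtype.val hab :))
  have hσπ : Associated (σ (adjoinGen ζ - 1)) (adjoinGen ζ - 1) := by
    rw [map_sub, map_one]
    exact hσ.associated_sub_one_sub_one hζ.adjoinGen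
  have hassoc := associated_adjoinGen_sub_one_pow hζ
  have hnorm : (⟨x, hx⟩ * σ ⟨x, hx⟩ : Algebra.adjoin ℤ {ζ}) = (2 ^ e) ^ 2 :=
    Subtype.ext (by simp [σ, adjoinConj, Complex.mul_conj', h])
  have hmul : Associated (⟨x, hx⟩ * σ ⟨x, hx⟩) ((adjoinGen ζ - 1) ^ (2 * (2 ^ k * e))) := by
    rw [hnorm, mul_comm, pow_mul, pow_mul]
    exact hassoc.pow_pow.pow_pow.symm
  have h2e : Associated ((adjoinGen ζ - 1) ^ (2 ^ k * e)) (2 ^ e) := by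
    rw [pow_mul]
    exact hassoc.pow_pow
  obtain ⟨u, hu⟩ := h2e.symm.trans
    ((prime_adjoinGen_sub_one hζ).associated_pow_of_associated_mul_map σ hσπ hmul).symm
  exact ⟨u, by simpa using (congrArg Subtype.val hu).symm⟩

end ComplexCyclotomic

section WalshHadamard

open ZMod

variable {n q m : ℕ}

theorem gWHT_mem_adjoin (f : (Fin n → ZMod 2) → ZMod q) (u : Fin n → ZMod 2) :
    gWHT f u ∈ Algebra.adjoin ℤ {zeta q} :=
  Subalgebra.sum_mem _ fun _ _ ↦ Subalgebra.mul_mem _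
    (Subalgebra.pow_mem _ (Algebra.self_mem_adjoin_singleton ℤ _) _)
    (Subalgebra.pow_mem _ (Subalgebra.neg_mem _ (Subalgebra.one_mem _)) _)

variable [NeZero q]

theorem zeta_pow_val (a : ZMod q) : zeta q ^ a.val = stdAddChar a := by
  rw [stdAddChar_apply, toCircle_apply, zeta, ← Complex.exp_nat_mul]
  ring_nf

theorem gWHT_apply_zero (f : (Fin n → ZMod 2) → ZMod q) :
    gWHT f 0 = ∑ x, stdAddChar (f x) := by
  simp [gWHT, ip, zeta_pow_val]

theorem sum_stdAddChar_dotProduct (v : Fin m → ZMod q) :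
    ∑ c : Fin m → ZMod q, stdAddChar (c ⬝ᵥ v) = if v = 0 then (q : ℂ) ^ m else 0 := by
  let ψ : AddChar (Fin m → ZMod q) ℂ := stdAddChar.compAddMonoidHom
    (AddMonoidHom.mk' (· ⬝ᵥ v) fun a b ↦ add_dotProduct a b v)
  have hψ : ψ = 0 ↔ v = 0 := by
    refine ⟨fun h ↦ funext fun j ↦ injective_stdAddChar ?_, fun h ↦ ?_⟩
    · simpa [ψ] using DFunLike.congr_fun h (Pi.single j 1)
    · ext c
      simp [ψ, h]
  classical
  rw [show ∑ c, stdAddChar (c ⬝ᵥ v) = ∑ c, ψ c from rfl, ψ.sum_eq_ite]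
  simp [hψ, ZMod.card]

theorem sum_gWHT_components_apply_zero (F : (Fin n → ZMod 2) → Fin m → ZMod q) :
    ∑ c : Fin m → ZMod q, gWHT (fun x ↦ ∑ j, c j * F x j) 0 = (q : ℂ) ^ m * #{x | F x = 0} := by
  simp_rw [gWHT_apply_zero]
  rw [sum_comm]
  change ∑ x, ∑ c : Fin m → ZMod q, stdAddChar (c ⬝ᵥ F x) = _
  simp_rw [sum_stdAddChar_dotProduct]
  rw [← sum_filter, sum_const, nsmul_eq_mul, mul_comm]

theorem sum_erase_zero_gWHT_components_apply_zero (F : (Fin n → ZMod 2) → Fin m → ZMod q) :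
    ∑ c ∈ univ.erase (0 : Fin m → ZMod q), gWHT (fun x ↦ ∑ j, c j * F x j) 0
      = (q : ℂ) ^ m * #{x | F x = 0} - 2 ^ n := by
  rw [← sum_gWHT_components_apply_zero F, ← sum_erase_add _ _ (mem_univ 0)]
  simp [gWHT, ip]

end WalshHadamard

theorem odd_card_univ_erase_zero {t m : ℕ} (htm : t * m ≠ 0) :
    Odd #(univ.erase (0 : Fin m → ZMod (2 ^ t))) := by
  rw [card_erase_of_mem (mem_univ 0), card_univ, Fintype.card_fun, ZMod.card, Fintype.card_fin,
    ← pow_mul]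
  exact Nat.Even.sub_odd Nat.one_le_two_pow (Nat.even_pow.mpr ⟨even_two, htm⟩) odd_one

theorem IsGbent.exists_unit_mul {h k : ℕ} {f : (Fin (2 * h) → ZMod 2) → ZMod (2 ^ (k + 1))}
    (hf : IsGbent f) (v : Fin (2 * h) → ZMod 2) :
    ∃ u : (Algebra.adjoin ℤ {zeta (2 ^ (k + 1))})ˣ, gWHT f v = 2 ^ h * u := by
  refine exists_unit_of_norm_eq_two_pow (Complex.isPrimitiveRoot_exp _ (by positivity))
    (gWHT_mem_adjoin f v) ?_
  rw [hf v]
  push_cast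
  rw [mul_div_cancel_left₀ _ two_ne_zero, Real.rpow_natCast]

/-- if `F : 𝔽₂ⁿ → ℤ_{2^t}^m` is a vectorial gbent function
(`n > 2` even), then `m ≤ n/(2t)`, i.e. `2tm ≤ n`. -/
theorem stmt12 (n t m : ℕ) (ht : 1 ≤ t) (hn2 : 2 < n) (hne : Even n)
    (F : (Fin n → ZMod 2) → Fin m → ZMod (2 ^ t))
    (hF : IsVectorialGbent F) :
    2 * t * m ≤ n := by
  obtain ⟨k, rfl⟩ : ∃ k, t = k + 1 := ⟨t - 1, by omega⟩
  obtain ⟨h, rfl⟩ : ∃ h, n = 2 * h := hne.two_dvd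
  by_contra! hlt
  have hζ : IsPrimitiveRoot (zeta (2 ^ (k + 1))) (2 ^ (k + 1)) :=
    Complex.isPrimitiveRoot_exp _ (by positivity)
  choose! u hu using fun c (hc : c ≠ 0) ↦ (hF c hc).exists_unit_mul 0
  obtain ⟨b, rfl⟩ : ∃ b, h = b + 1 := ⟨h - 1, by omega⟩
  obtain ⟨a, ha⟩ : ∃ a, (k + 1) * m = b + 2 + a := Nat.exists_eq_add_of_le (by nlinarith)
  -- `2^h ∑_{c ≠ 0} u_c = 2^(tm) #F⁻¹(0) - 2^(2h)` with `tm ≥ h + 1`, so the sum of units is even.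
  refine not_two_dvd_sum_units_of_odd_card (not_isUnit_adjoinGen_sub_one hζ)
    (adjoinGen_sub_one_dvd_or_dvd_sub_one hζ) (odd_card_univ_erase_zero (by rw [ha]; omega)) u
    ⟨((2 ^ a * #{x | F x = 0} - 2 ^ b : ℤ) : Algebra.adjoin ℤ {zeta (2 ^ (k + 1))}),
      Subtype.ext ?_⟩
  apply mul_left_cancel₀ (pow_ne_zero (b + 1) (two_ne_zero' ℂ))
  push_cast
  rw [mul_sum, ← sum_congr rfl fun c hc ↦ hu c (ne_of_mem_erase hc),
    sum_erase_zero_gWHT_components_apply_zero]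
  push_cast
  rw [← pow_mul, ha]
  ring
end
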